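/- The explicit tensors g_{ij} and Υ_{ijk} on ℝ⁵ satisfy the tracefree condition and Cartan's identity: (ii) Σ_{i,j} g^{ij}·Υ_{ijk} = 0 for every k ∈ {0,…,4}; and (iii) Σ_{l,m} g^{lm}·(Υ_{ijl}Υ_{kmp} + Υ_{kil}Υ_{jmp} + Υ_{jkl}Υ_{imp}) = g_{ij}g_{kp} + g_{ki}g_{jp} + g_{jk}g_{ip} for all i, j, k, p ∈ {0,…,4}. -/
import Mathlib


/-- The metric `g_{ij}` with `Σ g_{ij}θᵢθⱼ = θ₀θ₄ − 4θ₁θ₃ + 3θ₂²`, of signature (3,2). -/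
noncomputable def gmat : Matrix (Fin 5) (Fin 5) ℝ :=
  !![0, 0, 0, 0, 1/2;
     0, 0, 0, -2, 0;
     0, 0, 3, 0, 0;
     0, -2, 0, 0, 0;
     1/2, 0, 0, 0, 0]

/-- The inverse metric `g^{ij}`. -/
noncomputable def ginv : Matrix (Fin 5) (Fin 5) ℝ :=
  !![0, 0, 0, 0, 2;
     0, 0, 0, -1/2, 0;
     0, 0, 1/3, 0, 0;
     0, -1/2, 0, 0, 0;
     2, 0, 0, 0, 0]

/-- The totally symmetric tensor `Υ_{ijk}` with
`Σ Υ_{ijk}θᵢθⱼθₖ = 3√3(θ₀θ₂θ₄ + 2θ₁θ₂θ₃ − θ₂³ − θ₀θ₃² − θ₄θ₁²)`. -/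
noncomputable def Ups (i j k : Fin 5) : ℝ :=
  if ({i, j, k} : Multiset (Fin 5)) = {0, 2, 4} then Real.sqrt 3 / 2
  else if ({i, j, k} : Multiset (Fin 5)) = {1, 2, 3} then Real.sqrt 3
  else if ({i, j, k} : Multiset (Fin 5)) = {2, 2, 2} then -3 * Real.sqrt 3
  else if ({i, j, k} : Multiset (Fin 5)) = {0, 3, 3} then -Real.sqrt 3
  else if ({i, j, k} : Multiset (Fin 5)) = {1, 1, 4} then -Real.sqrt 3
  else 0

/-- Integer tensor equal to `(2/√3)·Υ`. -/
def U2 (i j k : Fin 5) : ℤ :=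
  if ({i, j, k} : Multiset (Fin 5)) = {0, 2, 4} then 1
  else if ({i, j, k} : Multiset (Fin 5)) = {1, 2, 3} then 2
  else if ({i, j, k} : Multiset (Fin 5)) = {2, 2, 2} then -6
  else if ({i, j, k} : Multiset (Fin 5)) = {0, 3, 3} then -2
  else if ({i, j, k} : Multiset (Fin 5)) = {1, 1, 4} then -2
  else 0

/-- Integer matrix equal to `6·g⁻¹`. -/
def gi6 : Matrix (Fin 5) (Fin 5) ℤ :=
  !![0, 0, 0, 0, 12;
     0, 0, 0, -3, 0;
     0, 0, 2, 0, 0;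
     0, -3, 0, 0, 0;
     12, 0, 0, 0, 0]

/-- Integer matrix equal to `2·g`. -/
def g2 : Matrix (Fin 5) (Fin 5) ℤ :=
  !![0, 0, 0, 0, 1;
     0, 0, 0, -4, 0;
     0, 0, 6, 0, 0;
     0, -4, 0, 0, 0;
     1, 0, 0, 0, 0]

lemma Ups_eq (i j k : Fin 5) : Ups i j k = Real.sqrt 3 / 2 * (U2 i j k : ℝ) := by
  unfold Ups U2
  split_ifs <;> push_cast <;> ring

lemma ginv_eq (i j : Fin 5) : ginv i j = (gi6 i j : ℝ) / 6 := by
  fin_cases i <;> fin_cases j <;> norm_num [ginv, gi6]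

lemma gmat_eq (i j : Fin 5) : gmat i j = (g2 i j : ℝ) / 2 := by
  fin_cases i <;> fin_cases j <;> norm_num [gmat, g2]

set_option maxHeartbeats 4000000 in
lemma intpart1 : ∀ k : Fin 5, ∑ i : Fin 5, ∑ j : Fin 5, gi6 i j * U2 i j k = 0 := by decide

set_option maxHeartbeats 16000000 in
lemma intpart2 : ∀ i j k p : Fin 5,
    ∑ l : Fin 5, ∑ m : Fin 5,
      gi6 l m * (U2 i j l * U2 k m p + U2 k i l * U2 j m p + U2 j k l * U2 i m p)
      = 2 * (g2 i j * g2 k p + g2 k i * g2 j p + g2 j k * g2 i p) := by decide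

/-- The pair `(g,Υ)` is tracefree, `g^{ij}Υ_{ijk} = 0`, and satisfies Cartan's identity
`g^{lm}(Υ_{ijl}Υ_{kmp} + Υ_{kil}Υ_{jmp} + Υ_{jkl}Υ_{imp}) = g_{ij}g_{kp} + g_{ki}g_{jp} + g_{jk}g_{ip}`. -/
theorem stmt7 :
    (∀ k : Fin 5, ∑ i : Fin 5, ∑ j : Fin 5, ginv i j * Ups i j k = 0) ∧
    (∀ i j k p : Fin 5,
      ∑ l : Fin 5, ∑ m : Fin 5,
        ginv l m * (Ups i j l * Ups k m p + Ups k i l * Ups j m p + Ups j k l * Ups i m p)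
        = gmat i j * gmat k p + gmat k i * gmat j p + gmat j k * gmat i p) := by
  have hs : Real.sqrt 3 * Real.sqrt 3 = 3 := Real.mul_self_sqrt (by norm_num)
  constructor
  · intro k
    have key : ∀ i j : Fin 5, ginv i j * Ups i j k
        = Real.sqrt 3 / 12 * ((gi6 i j * U2 i j k : ℤ) : ℝ) := by
      intro i j
      rw [ginv_eq, Ups_eq]
      push_cast
      ring
    simp only [key, ← Finset.mul_sum]
    have : (∑ i : Fin 5, ∑ j : Fin 5, ((gi6 i j * U2 i j k : ℤ) : ℝ)) = 0 := by
      have := intpart1 k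
      exact_mod_cast congrArg (fun z : ℤ => (z : ℝ)) this
    rw [this, mul_zero]
  · intro i j k p
    have key : ∀ l m : Fin 5,
        ginv l m * (Ups i j l * Ups k m p + Ups k i l * Ups j m p + Ups j k l * Ups i m p)
        = (1 : ℝ) / 8 * ((gi6 l m * (U2 i j l * U2 k m p + U2 k i l * U2 j m p + U2 j k l * U2 i m p) : ℤ) : ℝ) := by
      intro l m
      rw [ginv_eq, Ups_eq, Ups_eq, Ups_eq, Ups_eq, Ups_eq, Ups_eq]
      push_cast
      linear_combination ((gi6 l m : ℝ) * ((U2 i j l : ℝ) * (U2 k m p : ℝ)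
        + (U2 k i l : ℝ) * (U2 j m p : ℝ) + (U2 j k l : ℝ) * (U2 i m p : ℝ)) / 24) * hs
    simp only [key, ← Finset.mul_sum]
    have : (∑ l : Fin 5, ∑ m : Fin 5,
        ((gi6 l m * (U2 i j l * U2 k m p + U2 k i l * U2 j m p + U2 j k l * U2 i m p) : ℤ) : ℝ))
        = 2 * ((g2 i j * g2 k p + g2 k i * g2 j p + g2 j k * g2 i p : ℤ) : ℝ) := by
      have := intpart2 i j k p
      exact_mod_cast congrArg (fun z : ℤ => (z : ℝ)) this
    rw [this, gmat_eq, gmat_eq, gmat_eq, gmat_eq, gmat_eq, gmat_eq]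
    push_cast
    ring
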